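/- Let φ be analytic on the unit disk 𝔻 with φ(0) = 1, and let f be analytic on 𝔻 with f(0)=0, f'(0)=1, f' nonvanishing, and 1 + z f''(z)/f'(z) = φ(ω(z)) for some analytic ω : 𝔻 → 𝔻 with ω(0) = 0. Then for every z ∈ 𝔻 with z ≠ 0, writing t = |z| and w = ω(z), the Schwarzian derivative of f satisfies |S_f(z)| ≤ |2wφ'(w) + 1 − φ(w)²|/(2t²) + ((t² − |w|²)/(t²(1−t²))) |φ'(w)|. -/

import Mathlib

/-!
Write `p = φ ∘ ω`. Differentiating `z f''/f' = p - 1` once gives `2 z² S_f = 2 z p' + 1 - p²`.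
Let `g = ω(z)/z`, the `dslope` of `ω` at `0`; then `z ω' = ω + z² g'`, so
`S_f(z) = (2 w φ'(w) + 1 - φ(w)²) / (2 z²) + φ'(w) g'(z)`. By the Schwarz lemma `g` maps the
disc into the closed disc, and the Schwarz–Pick lemma bounds `|g'(z)|` by
`(1 - |g(z)|²) / (1 - t²) = (t² - |w|²) / (t² (1 - t²))`.
-/

open Metric Set Filter Topology ComplexConjugate

noncomputable def blaschkeFactor (a z : ℂ) : ℂ := (z - a) / (1 - conj a * z)

theorem sq_norm_one_sub_conj_mul_sub_sq_norm_sub (a z : ℂ) :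
    ‖1 - conj a * z‖ ^ 2 - ‖z - a‖ ^ 2 = (1 - ‖a‖ ^ 2) * (1 - ‖z‖ ^ 2) := by
  simp only [Complex.sq_norm, ← Complex.ofReal_inj, Complex.ofReal_sub, Complex.ofReal_mul,
    Complex.ofReal_one, ← Complex.mul_conj, map_sub, map_mul, map_one, Complex.conj_conj]
  ring

theorem one_sub_conj_mul_self (a : ℂ) : 1 - conj a * a = ((1 - ‖a‖ ^ 2 : ℝ) : ℂ) := by
  rw [mul_comm, Complex.mul_conj, ← Complex.sq_norm]; push_cast; ring

theorem one_sub_conj_mul_ne_zero {a z : ℂ} (ha : ‖a‖ < 1) (hz : ‖z‖ ≤ 1) :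
    1 - conj a * z ≠ 0 := by
  have : ‖conj a * z‖ < 1 := by
    rw [norm_mul, Complex.norm_conj]
    exact mul_lt_one_of_nonneg_of_lt_one_left (norm_nonneg a) ha hz
  rw [sub_ne_zero]
  rintro h
  rw [← h, norm_one] at this
  exact this.false

theorem norm_blaschkeFactor_le_one {a z : ℂ} (ha : ‖a‖ < 1) (hz : ‖z‖ ≤ 1) :
    ‖blaschkeFactor a z‖ ≤ 1 := by
  have := sq_norm_one_sub_conj_mul_sub_sq_norm_sub a z
  have hden := norm_pos_iff.mpr (one_sub_conj_mul_ne_zero ha hz)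
  rw [blaschkeFactor, norm_div, div_le_one hden]
  have : 0 ≤ (1 - ‖a‖ ^ 2) * (1 - ‖z‖ ^ 2) := by
    apply mul_nonneg <;> nlinarith [norm_nonneg a, norm_nonneg z]
  nlinarith [norm_nonneg (z - a)]

theorem norm_blaschkeFactor_lt_one {a z : ℂ} (ha : ‖a‖ < 1) (hz : ‖z‖ < 1) :
    ‖blaschkeFactor a z‖ < 1 := by
  have := sq_norm_one_sub_conj_mul_sub_sq_norm_sub a z
  have hden := norm_pos_iff.mpr (one_sub_conj_mul_ne_zero ha hz.le)
  rw [blaschkeFactor, norm_div, div_lt_one hden]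
  have : 0 < (1 - ‖a‖ ^ 2) * (1 - ‖z‖ ^ 2) := by
    apply mul_pos <;> nlinarith [norm_nonneg a, norm_nonneg z]
  nlinarith [norm_nonneg (z - a)]

@[simp] theorem blaschkeFactor_self (a : ℂ) : blaschkeFactor a a = 0 := by
  simp [blaschkeFactor]

@[simp] theorem blaschkeFactor_neg_zero (a : ℂ) : blaschkeFactor (-a) 0 = a := by
  simp [blaschkeFactor]

theorem hasDerivAt_blaschkeFactor {a z : ℂ} (hz : 1 - conj a * z ≠ 0) :
    HasDerivAt (blaschkeFactor a) ((1 - conj a * a) / (1 - conj a * z) ^ 2) z := by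
  have h := ((hasDerivAt_id z).sub_const a).div
    (((hasDerivAt_id z).const_mul (conj a)).const_sub 1) hz
  exact h.congr_deriv (by simp only [id]; ring)

theorem differentiableOn_blaschkeFactor {a : ℂ} (ha : ‖a‖ < 1) :
    DifferentiableOn ℂ (blaschkeFactor a) (closedBall 0 1) := fun _ hz ↦
  (hasDerivAt_blaschkeFactor (one_sub_conj_mul_ne_zero ha (mem_closedBall_zero_iff.mp hz)))
    |>.differentiableAt.differentiableWithinAt

theorem deriv_eq_zero_of_mapsTo_ball_closedBall_of_norm_eq {g : ℂ → ℂ} {a : ℂ} {R : ℝ}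
    (hg : DifferentiableOn ℂ g (ball 0 R)) (hmaps : MapsTo g (ball 0 R) (closedBall 0 ‖g a‖))
    (ha : a ∈ ball 0 R) : deriv g a = 0 := by
  have hmax : IsMaxOn (norm ∘ g) (ball 0 R) a := fun z hz ↦
    mem_closedBall_zero_iff.mp (hmaps hz)
  have hconst : g =ᶠ[𝓝 a] fun _ ↦ g a := eventually_of_mem (isOpen_ball.mem_nhds ha)
    (Complex.eqOn_of_isPreconnected_of_isMaxOn_norm (convex_ball 0 R).isPreconnected
      isOpen_ball hg ha hmax)
  rw [hconst.deriv_eq, deriv_const]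

theorem norm_deriv_le_of_mapsTo_ball_closedBall {g : ℂ → ℂ} {a : ℂ}
    (hg : DifferentiableOn ℂ g (ball 0 1)) (hmaps : MapsTo g (ball 0 1) (closedBall 0 1))
    (ha : a ∈ ball 0 1) : ‖deriv g a‖ ≤ (1 - ‖g a‖ ^ 2) / (1 - ‖a‖ ^ 2) := by
  have ha' : ‖a‖ < 1 := mem_ball_zero_iff.mp ha
  have hga : ‖g a‖ ≤ 1 := mem_closedBall_zero_iff.mp (hmaps ha)
  have hden : 0 < 1 - ‖a‖ ^ 2 := by nlinarith [norm_nonneg a]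
  rcases hga.eq_or_lt with hga | hga
  · rw [deriv_eq_zero_of_mapsTo_ball_closedBall_of_norm_eq hg (hga ▸ hmaps) ha, hga]
    simp
  set b := g a
  -- Conjugating by Blaschke factors moves `a` and `g a` to `0`, where the Schwarz lemma applies.
  set q := blaschkeFactor b ∘ g ∘ blaschkeFactor (-a)
  have hmaps_inner : MapsTo (blaschkeFactor (-a)) (ball 0 1) (ball 0 1) := fun z hz ↦ by
    simpa using norm_blaschkeFactor_lt_one (by simpa using ha') (mem_ball_zero_iff.mp hz)
  have hq_maps : MapsTo q (ball 0 1) (closedBall (q 0) 1) := fun z hz ↦ by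
    simpa [q, b] using norm_blaschkeFactor_le_one hga (mem_closedBall_zero_iff.mp
      (hmaps (hmaps_inner hz)))
  have hq_diff : DifferentiableOn ℂ q (ball 0 1) :=
    (differentiableOn_blaschkeFactor hga).comp (hg.comp
      ((differentiableOn_blaschkeFactor (by simpa using ha')).mono ball_subset_closedBall)
      hmaps_inner) (hmaps.comp hmaps_inner)
  have h_inner : HasDerivAt (blaschkeFactor (-a)) ((1 - ‖a‖ ^ 2 : ℝ) : ℂ) 0 :=
    (hasDerivAt_blaschkeFactor (by simp)).congr_deriv (by simp [one_sub_conj_mul_self])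
  have h_g : HasDerivAt g (deriv g a) (blaschkeFactor (-a) 0) := by
    rw [blaschkeFactor_neg_zero]
    exact (hg.differentiableAt (isOpen_ball.mem_nhds ha)).hasDerivAt
  have hb_pos : 0 < 1 - ‖b‖ ^ 2 := by nlinarith [norm_nonneg b]
  have hb : 1 - conj b * b ≠ 0 := one_sub_conj_mul_ne_zero hga hga.le
  have h_outer :
      HasDerivAt (blaschkeFactor b) (1 - conj b * b)⁻¹ (g (blaschkeFactor (-a) 0)) := by
    rw [blaschkeFactor_neg_zero]
    exact (hasDerivAt_blaschkeFactor hb).congr_deriv (by field_simp)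
  have hq_le := Complex.norm_deriv_le_one_of_mapsTo_ball hq_diff hq_maps one_pos
  rw [(h_outer.comp 0 (h_g.comp 0 h_inner)).deriv, one_sub_conj_mul_self, norm_mul, norm_mul,
    norm_inv, Complex.norm_real, Complex.norm_real, Real.norm_of_nonneg hden.le,
    Real.norm_of_nonneg hb_pos.le, inv_mul_le_iff₀ hb_pos, mul_one] at hq_le
  rwa [le_div_iff₀ hden]

theorem hasDerivAt_dslope_of_ne {𝕜 : Type*} [NontriviallyNormedField 𝕜] {f : 𝕜 → 𝕜} {c z : 𝕜}
    (hz : z ≠ c) (hf : DifferentiableAt 𝕜 f z) :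
    HasDerivAt (dslope f c) ((deriv f z * (z - c) - (f z - f c)) / (z - c) ^ 2) z := by
  have hslope : (fun x ↦ (f x - f c) / (x - c)) =ᶠ[𝓝 z] dslope f c :=
    eventually_of_mem (isOpen_ne.mem_nhds hz) fun x hx ↦ by
      rw [dslope_of_ne _ hx, slope_def_field]
  exact (((hf.hasDerivAt.sub_const (f c)).div ((hasDerivAt_id z).sub_const c)
    (sub_ne_zero.mpr hz)).congr_deriv (by simp)).congr_of_eventuallyEq hslope.symm

theorem norm_deriv_dslope_le {ω : ℂ → ℂ} {z : ℂ} (hω : DifferentiableOn ℂ ω (ball 0 1))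
    (hmaps : MapsTo ω (ball 0 1) (closedBall 0 1)) (hω0 : ω 0 = 0) (hz : z ∈ ball 0 1)
    (hz0 : z ≠ 0) :
    ‖deriv (dslope ω 0) z‖ ≤ (‖z‖ ^ 2 - ‖ω z‖ ^ 2) / (‖z‖ ^ 2 * (1 - ‖z‖ ^ 2)) := by
  have hg : DifferentiableOn ℂ (dslope ω 0) (ball 0 1) :=
    (Complex.differentiableOn_dslope (ball_mem_nhds 0 one_pos)).mpr hω
  have hg_maps : MapsTo (dslope ω 0) (ball 0 1) (closedBall 0 1) := fun x hx ↦ by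
    simpa using Complex.norm_dslope_le_div_of_mapsTo_ball hω (by rwa [hω0]) hx
  have hgz : ‖dslope ω 0 z‖ = ‖ω z‖ / ‖z‖ := by
    rw [dslope_of_ne _ hz0, slope_def_field, hω0, sub_zero, sub_zero, norm_div]
  have hz_pos : 0 < ‖z‖ := norm_pos_iff.mpr hz0
  convert norm_deriv_le_of_mapsTo_ball_closedBall hg hg_maps hz using 1
  rw [hgz]
  field_simp

noncomputable def schwarzian (f : ℂ → ℂ) (z : ℂ) : ℂ :=
  deriv (deriv (deriv f)) z / deriv f z - 3 / 2 * (deriv (deriv f) z / deriv f z) ^ 2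

theorem two_mul_sq_mul_schwarzian_eq {f P : ℂ → ℂ} {z : ℂ}
    (hf₂ : DifferentiableAt ℂ (deriv f) z) (hf₃ : DifferentiableAt ℂ (deriv (deriv f)) z)
    (hP : DifferentiableAt ℂ P z) (hf' : deriv f z ≠ 0)
    (h : ∀ᶠ x in 𝓝 z, 1 + x * deriv (deriv f) x / deriv f x = P x) :
    2 * z ^ 2 * schwarzian f z = 2 * z * deriv P z + 1 - P z ^ 2 := by
  have hprod : (fun x ↦ x * deriv (deriv f) x) =ᶠ[𝓝 z] fun x ↦ (P x - 1) * deriv f x := by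
    filter_upwards [h, hf₂.continuousAt.eventually_ne hf'] with x hx hx'
    rw [← hx]
    field_simp
    ring
  have hderiv := ((hasDerivAt_id z).mul hf₃.hasDerivAt).deriv.symm.trans <|
    hprod.deriv_eq.trans ((hP.hasDerivAt.sub_const 1).mul hf₂.hasDerivAt).deriv
  simp only [id, one_mul] at hderiv
  rw [schwarzian]
  field_simp
  linear_combination (2 * z * deriv f z) * hderiv
    + (-3 * z * deriv (deriv f) z - (P z + 1) * deriv f z) * hprod.eq_of_nhds

theorem schwarzian_pointwise_estimate_general (φ : ℂ → ℂ)
    (hφ : DifferentiableOn ℂ φ (ball (0:ℂ) 1))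
    (ω : ℂ → ℂ) (hω : DifferentiableOn ℂ ω (ball (0:ℂ) 1))
    (hωmap : ∀ z ∈ ball (0:ℂ) 1, ω z ∈ ball (0:ℂ) 1) (hω0 : ω 0 = 0)
    (f : ℂ → ℂ) (hf : DifferentiableOn ℂ f (ball (0:ℂ) 1))
    (hf' : ∀ z ∈ ball (0:ℂ) 1, deriv f z ≠ 0)
    (hsub : ∀ z ∈ ball (0:ℂ) 1,
      1 + z * deriv (deriv f) z / deriv f z = φ (ω z)) :
    ∀ z ∈ ball (0:ℂ) 1, z ≠ 0 →
      ‖(deriv (deriv (deriv f)) z / deriv f z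
          - (3 / 2) * (deriv (deriv f) z / deriv f z) ^ 2)‖
        ≤ ‖(2 * ω z * deriv φ (ω z) + 1 - φ (ω z) ^ 2)‖
            / (2 * ‖z‖ ^ 2)
          + (‖z‖ ^ 2 - ‖(ω z)‖ ^ 2)
              / (‖z‖ ^ 2 * (1 - ‖z‖ ^ 2))
            * ‖(deriv φ (ω z))‖ := by
  intro z hz hz0
  have hf_an := hf.analyticOnNhd isOpen_ball
  have hωz := hω.differentiableAt (isOpen_ball.mem_nhds hz)
  have hφw := hφ.differentiableAt (isOpen_ball.mem_nhds (hωmap z hz))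
  have hS := two_mul_sq_mul_schwarzian_eq (hf_an.deriv z hz).differentiableAt
    (hf_an.deriv.deriv z hz).differentiableAt (hφw.comp z hωz) (hf' z hz)
    (eventually_of_mem (isOpen_ball.mem_nhds hz) hsub)
  have hg := (hasDerivAt_dslope_of_ne hz0 hωz).deriv
  have hS_split : schwarzian f z = (2 * ω z * deriv φ (ω z) + 1 - φ (ω z) ^ 2) / (2 * z ^ 2)
      + deriv φ (ω z) * deriv (dslope ω 0) z := by
    rw [deriv_comp z hφw hωz, Function.comp_apply] at hS
    simp only [hg, hω0, sub_zero]
    field_simp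
    linear_combination hS
  have hSP := norm_deriv_dslope_le hω (fun x hx ↦ ball_subset_closedBall (hωmap x hx)) hω0 hz hz0
  change ‖schwarzian f z‖ ≤ _
  calc ‖schwarzian f z‖
      ≤ ‖2 * ω z * deriv φ (ω z) + 1 - φ (ω z) ^ 2‖ / (2 * ‖z‖ ^ 2)
        + ‖deriv φ (ω z)‖ * ‖deriv (dslope ω 0) z‖ := by
        rw [hS_split]
        refine (norm_add_le _ _).trans_eq ?_
        rw [norm_div, norm_mul, norm_mul, norm_pow, Complex.norm_two]
    _ ≤ _ := by
        rw [mul_comm _ ‖deriv φ (ω z)‖]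
        gcongr

/-- Pointwise Schwarzian estimate for functions with `1 + z f''/f' = φ ∘ ω`:
for `z ≠ 0` in the disk, with `t = |z|`, `w = ω(z)`,
`|S_f(z)| ≤ |2wφ'(w) + 1 - φ(w)²|/(2t²) + ((t² - |w|²)/(t²(1-t²))) |φ'(w)|`. -/
theorem schwarzian_pointwise_estimate (φ : ℂ → ℂ)
    (hφ : DifferentiableOn ℂ φ (ball (0:ℂ) 1)) (hφ0 : φ 0 = 1)
    (ω : ℂ → ℂ) (hω : DifferentiableOn ℂ ω (ball (0:ℂ) 1))
    (hωmap : ∀ z ∈ ball (0:ℂ) 1, ω z ∈ ball (0:ℂ) 1) (hω0 : ω 0 = 0)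
    (f : ℂ → ℂ) (hf : DifferentiableOn ℂ f (ball (0:ℂ) 1))
    (hf0 : f 0 = 0) (hf1 : deriv f 0 = 1)
    (hf' : ∀ z ∈ ball (0:ℂ) 1, deriv f z ≠ 0)
    (hsub : ∀ z ∈ ball (0:ℂ) 1,
      1 + z * deriv (deriv f) z / deriv f z = φ (ω z)) :
    ∀ z ∈ ball (0:ℂ) 1, z ≠ 0 →
      ‖(deriv (deriv (deriv f)) z / deriv f z
          - (3 / 2) * (deriv (deriv f) z / deriv f z) ^ 2)‖
        ≤ ‖(2 * ω z * deriv φ (ω z) + 1 - φ (ω z) ^ 2)‖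
            / (2 * ‖z‖ ^ 2)
          + (‖z‖ ^ 2 - ‖(ω z)‖ ^ 2)
              / (‖z‖ ^ 2 * (1 - ‖z‖ ^ 2))
            * ‖(deriv φ (ω z))‖ :=
  schwarzian_pointwise_estimate_general φ hφ ω hω hωmap hω0 f hf hf' hsub
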